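/- arXiv:math/0703230 — 4 statements merged into one kernel-verified Lean document; each statement's English description precedes it below -/
import Mathlib

section
/- Let ψ ∈ ℂ[z] and let G¹_1, G¹_2, G²_1, G²_2 ∈ ℂ[z]. Set A_1 = [[0, 1],[G¹_2, G¹_1 + ψ′]] and A_2 = [[0, 1],[G²_2, G²_1 + ψ′]] (the 2×2 modified companion matrices). Let c_1, c_2 ∈ ℂ with c_1 ≠ 0 and c_2 ≠ 0, let q ∈ ℂ[z], and set g = [[c_1, 0],[q, c_2]], a lower triangular matrix over ℂ[z] with nonzero constant diagonal. If g·A_2 = A_1·g + ψ·g′ (where g′ is the entrywise derivative of g, equal to [[0,0],[q′,0]]), then q = 0, c_1 = c_2 (so g is a scalar multiple of the identity), and G²_1 = G¹_1, G²_2 = G¹_2, i.e. A_1 = A_2. Consequently, two second-order Fuchsian equations whose associated logarithmic connections are related by such a gauge transformation are equal. -/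
open Polynomial Matrix

/-- A lower-triangular gauge transformation with nonzero constant diagonal taking one
2×2 modified companion matrix connection to another must be a scalar multiple of the
identity, and the two second-order Fuchsian equations coincide. -/
theorem gauge_equivalent_fuchsian_order_two_eq
    (ψ G11 G12 G21 G22 q : Polynomial ℂ) (c₁ c₂ : ℂ) (hc₁ : c₁ ≠ 0) (hc₂ : c₂ ≠ 0)
    (A₁ A₂ g g' : Matrix (Fin 2) (Fin 2) (Polynomial ℂ))
    (hA₁ : A₁ = !![0, 1; G12, G11 + ψ.derivative])
    (hA₂ : A₂ = !![0, 1; G22, G21 + ψ.derivative])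
    (hg : g = !![C c₁, 0; q, C c₂])
    (hg' : g' = !![0, 0; q.derivative, 0])
    (hgauge : g * A₂ = A₁ * g + ψ • g') :
    q = 0 ∧ c₁ = c₂ ∧ G21 = G11 ∧ G22 = G12 := by
  subst hA₁ hA₂ hg hg'
  have h00 := congrFun (congrFun hgauge 0) 0
  have h01 := congrFun (congrFun hgauge 0) 1
  have h10 := congrFun (congrFun hgauge 1) 0
  have h11 := congrFun (congrFun hgauge 1) 1
  simp [Matrix.mul_apply, Fin.sum_univ_two] at h00 h01 h10 h11
  have hq : q = 0 := h00.symm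
  have hc : c₁ = c₂ := h01
  subst hq hc
  refine ⟨rfl, rfl, ?_, ?_⟩
  · have h : C c₁ * (G21 + ψ.derivative) = C c₁ * (G11 + ψ.derivative) := by
      rw [mul_comm (G11 + ψ.derivative)] at h11; simpa using h11
    have := mul_left_cancel₀ (C_ne_zero.mpr hc₁) h
    exact add_right_cancel this
  · have h : C c₁ * G22 = C c₁ * G12 := by
      rw [mul_comm (C c₁) G12]; simpa using h10
    exact mul_left_cancel₀ (C_ne_zero.mpr hc₁) h
end

section
/- Let m ≥ 2, let ψ ∈ ℂ[z], and let G¹_1,…,G¹_m and G²_1,…,G²_m be polynomials in ℂ[z]. Let A_1 = A(ψ;G¹_1,…,G¹_m) and A_2 = A(ψ;G²_1,…,G²_m) be the corresponding m×m modified companion matrices. Let g be an m×m lower triangular matrix over ℂ[z] whose diagonal entries g_{11},…,g_{mm} are nonzero constants. If g·A_2 = A_1·g + ψ·g′ (g′ the entrywise derivative of g), then all off-diagonal entries of g vanish, g_{11} = g_{22} = ⋯ = g_{mm} (so g is a nonzero scalar multiple of the identity), and G²_k = G¹_k for every 1 ≤ k ≤ m, i.e. A_1 = A_2. In particular, if the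 logarithmic connections induced by two Fuchsian equations of order m are equivalent under such a gauge transformation, the two equations coincide. -/
open Polynomial Matrix

/-- The modified companion matrix `A(ψ; G₁,…,G_m)` (0-indexed): superdiagonal entries `1`,
diagonal entry `i·ψ'` in row `i` (0-indexed, corresponding to `(i-1)ψ'` 1-indexed),
and in the last row the entry in column `j` has `G (rev j)` added
(so the `(m-1, m-1)` entry is `G 0 + (m-1)·ψ'` and the `(m-1, 0)` entry is `G (m-1)`). -/
noncomputable def modifiedCompanion (m : ℕ) (ψ : Polynomial ℂ) (G : Fin m → Polynomial ℂ) :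
    Matrix (Fin m) (Fin m) (Polynomial ℂ) :=
  Matrix.of fun i j =>
    (if (i : ℕ) + 1 = (j : ℕ) then 1 else 0)
      + (if i = j then ((i : ℕ) : Polynomial ℂ) * ψ.derivative else 0)
      + (if (i : ℕ) = m - 1 then G j.rev else 0)

lemma mulA_apply (m : ℕ) (hm : 0 < m) (ψ : Polynomial ℂ) (G : Fin m → Polynomial ℂ)
    (g : Matrix (Fin m) (Fin m) (Polynomial ℂ)) (i j : Fin m) :
    (g * modifiedCompanion m ψ G) i j =
      (∑ k : Fin m, if (k : ℕ) + 1 = (j : ℕ) then g i k else 0)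
        + g i j * (((j : ℕ) : Polynomial ℂ) * ψ.derivative)
        + g i ⟨m - 1, by omega⟩ * G j.rev := by
  have hlast : ∀ k : Fin m, ((k : ℕ) = m - 1) ↔ k = ⟨m - 1, by omega⟩ := fun k => by
    rw [Fin.ext_iff]
  rw [Matrix.mul_apply]
  simp only [modifiedCompanion, Matrix.of_apply, mul_add, Finset.sum_add_distrib,
    mul_ite, mul_one, mul_zero, hlast]
  rw [Finset.sum_ite_eq', Finset.sum_ite_eq']
  simp

lemma A_mul_apply (m : ℕ) (ψ : Polynomial ℂ) (G : Fin m → Polynomial ℂ)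
    (g : Matrix (Fin m) (Fin m) (Polynomial ℂ)) (i j : Fin m) :
    (modifiedCompanion m ψ G * g) i j =
      (∑ k : Fin m, if (i : ℕ) + 1 = (k : ℕ) then g k j else 0)
        + (((i : ℕ) : Polynomial ℂ) * ψ.derivative) * g i j
        + (if (i : ℕ) = m - 1 then ∑ k : Fin m, G k.rev * g k j else 0) := by
  rw [Matrix.mul_apply]
  simp only [modifiedCompanion, Matrix.of_apply, add_mul, Finset.sum_add_distrib,
    ite_mul, one_mul, zero_mul]
  rw [Finset.sum_ite_eq]
  simp only [Finset.mem_univ, if_true]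
  congr 1
  by_cases h : (i : ℕ) = m - 1 <;> simp [h]

/-- If a lower-triangular gauge transformation with nonzero constant diagonal takes the
logarithmic connection of one order-`m` Fuchsian equation to that of another, then it is
a nonzero scalar multiple of the identity and the two equations coincide. -/
theorem gauge_equivalent_fuchsian_eq
    (m : ℕ) (hm : 2 ≤ m) (ψ : Polynomial ℂ)
    (G₁ G₂ : Fin m → Polynomial ℂ)
    (g : Matrix (Fin m) (Fin m) (Polynomial ℂ))
    (c : Fin m → ℂ) (hc : ∀ i, c i ≠ 0)
    (hdiag : ∀ i, g i i = C (c i))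
    (htri : ∀ i j : Fin m, i < j → g i j = 0)
    (hgauge : g * modifiedCompanion m ψ G₂ =
      modifiedCompanion m ψ G₁ * g + ψ • Matrix.of fun i j => (g i j).derivative) :
    (∀ i j : Fin m, i ≠ j → g i j = 0) ∧ (∀ i j : Fin m, c i = c j) ∧
      (∀ k : Fin m, G₂ k = G₁ k) := by
  have hm0 : 0 < m := by omega
  have hE : ∀ i j : Fin m,
      (∑ k : Fin m, if (k : ℕ) + 1 = (j : ℕ) then g i k else 0)
        + g i j * (((j : ℕ) : Polynomial ℂ) * ψ.derivative)
        + g i ⟨m - 1, by omega⟩ * G₂ j.rev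
      = (∑ k : Fin m, if (i : ℕ) + 1 = (k : ℕ) then g k j else 0)
        + (((i : ℕ) : Polynomial ℂ) * ψ.derivative) * g i j
        + (if (i : ℕ) = m - 1 then ∑ k : Fin m, G₁ k.rev * g k j else 0)
        + ψ * (g i j).derivative := by
    intro i j
    have h : (g * modifiedCompanion m ψ G₂) i j
        = (modifiedCompanion m ψ G₁ * g + ψ • Matrix.of fun i j => (g i j).derivative) i j := by
      rw [hgauge]
    rw [mulA_apply m hm0 ψ G₂ g i j, Matrix.add_apply, A_mul_apply,
      Matrix.smul_apply, Matrix.of_apply, smul_eq_mul] at h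
    exact h
  -- Main induction up the rows
  have key : ∀ n, ∀ hn : n < m,
      (∀ j : Fin m, (j : ℕ) < n → g ⟨n, hn⟩ j = 0) ∧ c ⟨n, hn⟩ = c ⟨0, hm0⟩ := by
    intro n
    induction n with
    | zero =>
      intro hn
      exact ⟨fun j hj => absurd hj (by omega), rfl⟩
    | succ n ih =>
      intro hn
      have hn' : n < m := by omega
      obtain ⟨ih0, ihc⟩ := ih hn'
      -- the recurrence from row n (not the last row)
      have hrec : ∀ j : Fin m,
          (∑ k : Fin m, if (k : ℕ) + 1 = (j : ℕ) then g ⟨n, hn'⟩ k else 0)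
            + g ⟨n, hn'⟩ j * (((j : ℕ) : Polynomial ℂ) * ψ.derivative)
          = g ⟨n + 1, hn⟩ j + ((n : Polynomial ℂ) * ψ.derivative) * g ⟨n, hn'⟩ j
            + ψ * (g ⟨n, hn'⟩ j).derivative := by
        intro j
        have h := hE ⟨n, hn'⟩ j
        rw [htri ⟨n, hn'⟩ ⟨m - 1, by omega⟩ (by simp only [Fin.mk_lt_mk]; omega),
          zero_mul, add_zero] at h
        rw [if_neg (show ¬ ((⟨n, hn'⟩ : Fin m) : ℕ) = m - 1 by simp only []; omega),
          add_zero] at h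
        have hs : (∑ k : Fin m, if ((⟨n, hn'⟩ : Fin m) : ℕ) + 1 = (k : ℕ) then g k j else 0)
            = g ⟨n + 1, hn⟩ j := by
          have hcond : ∀ k : Fin m, (((⟨n, hn'⟩ : Fin m) : ℕ) + 1 = (k : ℕ))
              ↔ k = ⟨n + 1, hn⟩ := fun k => by
            simp only [Fin.ext_iff, Fin.val_mk]; omega
          simp only [hcond, Finset.sum_ite_eq', Finset.mem_univ, if_true]
        rw [hs] at h
        exact h
      constructor
      · -- zeros below the diagonal in row n+1
        intro j hj
        have h := hrec j
        have hsum : (∑ k : Fin m, if (k : ℕ) + 1 = (j : ℕ) then g ⟨n, hn'⟩ k else 0) = 0 := by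
          apply Finset.sum_eq_zero
          intro k _
          split
          · exact ih0 k (by omega)
          · rfl
        rw [hsum] at h
        by_cases hjn : (j : ℕ) = n
        · have hd : g ⟨n, hn'⟩ j = C (c ⟨0, hm0⟩) := by
            have : j = ⟨n, hn'⟩ := Fin.ext hjn
            rw [this, hdiag, ihc]
          have hcast : ((j : ℕ) : Polynomial ℂ) = ((n : ℕ) : Polynomial ℂ) := by rw [hjn]
          rw [hd, hcast, Polynomial.derivative_C] at h
          linear_combination -h
        · have h0 : g ⟨n, hn'⟩ j = 0 := ih0 j (by omega)
          rw [h0, Polynomial.derivative_zero] at h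
          linear_combination -h
      · -- the diagonal constants agree
        have h := hrec ⟨n + 1, hn⟩
        have hsum : (∑ k : Fin m,
            if (k : ℕ) + 1 = ((⟨n + 1, hn⟩ : Fin m) : ℕ) then g ⟨n, hn'⟩ k else 0)
            = g ⟨n, hn'⟩ ⟨n, hn'⟩ := by
          have hcond : ∀ k : Fin m, ((k : ℕ) + 1 = ((⟨n + 1, hn⟩ : Fin m) : ℕ))
              ↔ k = ⟨n, hn'⟩ := fun k => by
            simp only [Fin.ext_iff, Fin.val_mk]; omega
          simp only [hcond, Finset.sum_ite_eq', Finset.mem_univ, if_true]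
        rw [hsum, hdiag, ihc,
          htri ⟨n, hn'⟩ ⟨n + 1, hn⟩ (by simp only [Fin.mk_lt_mk]; omega),
          hdiag, Polynomial.derivative_zero] at h
        have h' : C (c ⟨0, hm0⟩) = C (c ⟨n + 1, hn⟩) := by linear_combination h
        exact (Polynomial.C_injective h').symm
  have hcall : ∀ i : Fin m, c i = c ⟨0, hm0⟩ := by
    intro i
    have := (key (i : ℕ) i.isLt).2
    simpa using this
  have hzero : ∀ i j : Fin m, i ≠ j → g i j = 0 := by
    intro i j hij
    rcases lt_or_gt_of_ne hij with h | h
    · exact htri i j h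
    · have := (key (i : ℕ) i.isLt).1 j h
      simpa using this
  have hg : ∀ a b : Fin m, g a b = if a = b then C (c ⟨0, hm0⟩) else 0 := by
    intro a b
    by_cases h : a = b
    · rw [if_pos h, ← h, hdiag, hcall]
    · rw [if_neg h, hzero a b h]
  refine ⟨hzero, fun i j => by rw [hcall i, hcall j], ?_⟩
  -- last row gives G₂ = G₁
  have hfin : ∀ j : Fin m, G₂ j.rev = G₁ j.rev := by
    intro j
    have h := hE ⟨m - 1, by omega⟩ j
    have hT1 : (∑ k : Fin m, if (k : ℕ) + 1 = (j : ℕ) then g ⟨m - 1, by omega⟩ k else 0)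
        = 0 := by
      apply Finset.sum_eq_zero
      intro k _
      split
      · next hk =>
        apply hzero
        intro he
        have := congrArg Fin.val he
        simp only [] at this
        have := j.isLt
        omega
      · rfl
    have hS1 : (∑ k : Fin m,
        if ((⟨m - 1, by omega⟩ : Fin m) : ℕ) + 1 = (k : ℕ) then g k j else 0) = 0 := by
      apply Finset.sum_eq_zero
      intro k _
      rw [if_neg]
      have := k.isLt
      simp only []
      omega
    have hS3 : (∑ k : Fin m, G₁ k.rev * g k j) = G₁ j.rev * C (c ⟨0, hm0⟩) := by
      simp only [hg, mul_ite, mul_zero]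
      have hcond : ∀ k : Fin m, (k = j) ↔ k = j := fun _ => Iff.rfl
      rw [Finset.sum_ite_eq']
      simp
    have hS4 : (g ⟨m - 1, by omega⟩ j).derivative = 0 := by
      rw [hg]; split <;> simp
    rw [hT1, hS1, hS3, hS4, if_pos rfl, mul_zero, add_zero,
      hg ⟨m - 1, by omega⟩ ⟨m - 1, by omega⟩, if_pos rfl] at h
    have hcne : (C (c ⟨0, hm0⟩) : Polynomial ℂ) ≠ 0 := Polynomial.C_ne_zero.mpr (hc _)
    by_cases hj : (⟨m - 1, by omega⟩ : Fin m) = j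
    · have hjv : ((j : ℕ) : Polynomial ℂ) = (((m - 1 : ℕ) : ℕ) : Polynomial ℂ) := by
        rw [← hj]
      rw [hg ⟨m - 1, by omega⟩ j, if_pos hj, hjv] at h
      have e : C (c ⟨0, hm0⟩) * G₂ j.rev = C (c ⟨0, hm0⟩) * G₁ j.rev := by
        linear_combination h
      exact mul_left_cancel₀ hcne e
    · rw [hg ⟨m - 1, by omega⟩ j, if_neg hj] at h
      have e : C (c ⟨0, hm0⟩) * G₂ j.rev = C (c ⟨0, hm0⟩) * G₁ j.rev := by
        linear_combination h
      exact mul_left_cancel₀ hcne e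
  intro k
  have := hfin k.rev
  rwa [Fin.rev_rev] at this
end

section
/- Let ψ, G_1, G_2 ∈ ℂ[z] and set A = [[0, 1],[G_2, G_1 + ψ′]] (the 2×2 modified companion matrix). Let c_1, c_2 ∈ ℂ, let q, H_1, H_2 ∈ ℂ[z], and set g = [[c_1, 0],[q, c_2]]. If g′ + g·A − A·g = [[0, 0],[H_2, H_1]] (where g′ = [[0,0],[q′,0]] is the entrywise derivative), then q = 0, c_1 = c_2 (so g is a scalar multiple of the identity), and H_1 = 0 and H_2 = 0. In particular, no nonzero infinitesimal deformation of the coefficients of a second-order Fuchsian equation is induced by a global lower-triangular endomorphism with constant diagonal, so the tangent map of the inclusion of the space of Fuchsian equations into the moduli space of connections is injective. -/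
open Polynomial Matrix

/-- No nonzero infinitesimal deformation of the coefficients of a second-order Fuchsian
equation is induced by a lower-triangular endomorphism with constant diagonal: if
`g' + g·A − A·g = [[0,0],[H₂,H₁]]` for the 2×2 modified companion matrix `A`, then `g`
is a scalar and `H₁ = H₂ = 0`.  Hence the tangent map of the inclusion of the space of
Fuchsian equations into the moduli space of connections is injective. -/
theorem infinitesimal_deformation_injective_order_two
    (ψ G₁ G₂ H₁ H₂ q : Polynomial ℂ) (c₁ c₂ : ℂ)
    (A g g' : Matrix (Fin 2) (Fin 2) (Polynomial ℂ))
    (hA : A = !![0, 1; G₂, G₁ + ψ.derivative])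
    (hg : g = !![C c₁, 0; q, C c₂])
    (hg' : g' = !![0, 0; q.derivative, 0])
    (hdef : g' + g * A - A * g = !![0, 0; H₂, H₁]) :
    q = 0 ∧ c₁ = c₂ ∧ H₁ = 0 ∧ H₂ = 0 := by
  subst hA hg hg'
  have h00 := congrFun (congrFun hdef 0) 0
  have h01 := congrFun (congrFun hdef 0) 1
  have h10 := congrFun (congrFun hdef 1) 0
  have h11 := congrFun (congrFun hdef 1) 1
  simp [Matrix.mul_apply, Fin.sum_univ_two] at h00 h01 h10 h11
  have hq : q = 0 := h00
  have hc : c₁ = c₂ := by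
    have : C c₁ = C c₂ := by linear_combination h01
    exact C_injective this
  subst hq hc
  refine ⟨rfl, rfl, by linear_combination -h11, ?_⟩
  simp at h10
  linear_combination -h10
end

section
/- Let r ≥ 0 be a natural number and b_1,…,b_{r+2} ∈ ℂ. Let M be the (2r+2)×(2r+2) complex matrix whose first r+2 rows are the Vandermonde rows (1, b_i, b_i², …, b_i^{2r+1}) for i = 1,…,r+2, and whose last r rows are the derivative rows (0, 1, 2b_i, 3b_i², …, (2r+1)b_i^{2r}) for i = 1,…,r. Then the determinant of M equals, up to a sign ε ∈ {+1, −1}, the product (b_{r+1} − b_{r+2}) · ∏_{1 ≤ i ≤ r, r+1 ≤ j ≤ r+2} (b_i − b_j)² · ∏_{1 ≤ i < j ≤ r} (b_i − b_j)⁴; that is, there exists ε ∈ {1, −1} with det M = ε · (b_{r+1} − b_{r+2}) · ∏_{1 ≤ i ≤ r, r+1 ≤ j ≤ r+2} (b_i − b_j)² · ∏_{1 ≤ i < j ≤ r} (b_i − b_j)⁴. -/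
/-!
Work with nodes `c : Fin n → R`, the first `m` of them doubled (value and derivative rows).
Over `R[X]`, move the node `c k` of each derivative row to `c k + X`. The Vandermonde matrix
of the resulting nodes `v` has determinant `∏_{i<j} (v j - v i)`, and exactly `m` of these
factors are `X`: a node against its own shifted copy. Subtracting from each shifted row the
row of its unshifted node leaves `X` times the row of difference quotients
`((c + X) ^ j - c ^ j) / X`, which at `X = 0` is the derivative row `j * c ^ (j - 1)`.
Cancelling `X ^ m` and setting `X = 0` gives the confluent determinant as the product of the
remaining differences. Its square is a product of symmetric factors, so it regroups over pairs
of distinct nodes as `∏_{a<b} (c a - c b) ^ (2 μ a μ b)` with multiplicities `μ = 2` for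
doubled nodes and `1` otherwise; for `r` doubled nodes and two simple ones this is the square of the
claimed product.
-/

open Matrix Finset

/-- The confluent Vandermonde matrix: a `(2r+2) × (2r+2)` matrix whose first `r+2` rows
are the Vandermonde rows `(1, bᵢ, bᵢ², …, bᵢ^{2r+1})` for `i = 0,…,r+1`, and whose last
`r` rows are the derivative rows `(0, 1, 2bᵢ, …, (2r+1)bᵢ^{2r})` for `i = 0,…,r-1`. -/
def confluentVandermonde (r : ℕ) (b : Fin (r + 2) → ℂ) :
    Matrix (Fin (2 * r + 2)) (Fin (2 * r + 2)) ℂ :=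
  Matrix.of fun i j =>
    if h : (i : ℕ) < r + 2 then b ⟨i, h⟩ ^ (j : ℕ)
    else ((j : ℕ) : ℂ) * b ⟨(i : ℕ) - (r + 2), by have := i.isLt; omega⟩ ^ ((j : ℕ) - 1)

open Polynomial

theorem Fintype.prod_comp_eq_prod_pow_card {ι κ M : Type*} [Fintype ι] [Fintype κ]
    [DecidableEq κ] [CommMonoid M] (f : κ → M) (π : ι → κ) :
    ∏ i, f (π i) = ∏ a, f a ^ #{i | π i = a} := by
  simp_rw [← prod_const, Finset.prod_fiberwise']

theorem prod_pairs_comp_eq_prod_pow_card_mul_card {ι κ M : Type*} [Fintype ι] [LinearOrder ι]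
    [Fintype κ] [LinearOrder κ] [CommMonoid M] (π : ι → κ) (G : κ → κ → M)
    (hG : ∀ a b, G a b = G b a) :
    ∏ i, ∏ j, (if i < j ∧ π i ≠ π j then G (π i) (π j) else 1) =
      ∏ a, ∏ b, (if a < b then G a b else 1) ^ (#{i | π i = a} * #{i | π i = b}) := by
  set F : κ → κ → M := fun a b => if a < b then G a b else 1
  have hsplit : ∀ i j, (if i < j ∧ π i ≠ π j then G (π i) (π j) else 1) =
      (if i < j then F (π i) (π j) else 1) * (if i < j then F (π j) (π i) else 1) := by
    intro i j
    rcases lt_trichotomy (π i) (π j) with h | h | h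
    · simp [F, h, h.not_gt, h.ne]
    · simp [F, h]
    · simp [F, h, h.not_gt, h.ne', hG (π i)]
  have hjoin : ∀ i j,
      (if i < j then F (π i) (π j) else 1) * (if j < i then F (π i) (π j) else 1) =
        F (π i) (π j) := by
    intro i j
    rcases lt_trichotomy i j with h | rfl | h
    · simp [h, h.not_gt]
    · simp [F]
    · simp [h, h.not_gt]
  calc ∏ i, ∏ j, (if i < j ∧ π i ≠ π j then G (π i) (π j) else 1)
      = ∏ i, ∏ j, F (π i) (π j) := by
        -- read backwards, the pairs `i < j` with `π j < π i` are those `j < i` with `π i < π j`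
        simp_rw [hsplit, prod_mul_distrib]
        rw [prod_comm (f := fun i j => if i < j then F (π j) (π i) else 1), ← prod_mul_distrib]
        simp_rw [← prod_mul_distrib, hjoin]
    _ = ∏ a, ∏ b, F a b ^ (#{i | π i = a} * #{i | π i = b}) := by
        rw [Fintype.prod_comp_eq_prod_pow_card (fun a => ∏ j, F a (π j)) π]
        simp_rw [Fintype.prod_comp_eq_prod_pow_card (F _) π, ← prod_pow, ← pow_mul, mul_comm]

theorem Fin.castAdd_lt_natAdd {n m : ℕ} (a : Fin n) (k : Fin m) :
    Fin.castAdd m a < Fin.natAdd n k := by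
  rw [Fin.lt_def, Fin.val_castAdd, Fin.val_natAdd]
  omega

theorem X_mul_divX_X_add_C_pow_add {R : Type*} [CommRing R] (a : R) (j : ℕ) :
    X * divX ((X + C a) ^ j) + C a ^ j = (X + C a) ^ j := by
  have h := divX_mul_X_add ((X + C a) ^ j)
  rwa [coeff_X_add_C_pow, Nat.choose_zero_right, Nat.cast_one, mul_one, Nat.sub_zero, C_pow,
    mul_comm] at h

section Doubled

variable {R : Type*} [CommRing R] {n m : ℕ}

def doubledVandermonde (c : Fin n → R) (hm : m ≤ n) : Matrix (Fin (n + m)) (Fin (n + m)) R :=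
  Matrix.of <| Fin.append (fun a j => c a ^ (j : ℕ))
    fun k j => (j : ℕ) * c (Fin.castLE hm k) ^ ((j : ℕ) - 1)

def doubledNode (hm : m ≤ n) : Fin (n + m) → Fin n := Fin.append id (Fin.castLE hm)

noncomputable def deformedNodes (c : Fin n → R) (hm : m ≤ n) : Fin (n + m) → R[X] :=
  Fin.append (fun a => C (c a)) fun k => X + C (c (Fin.castLE hm k))

noncomputable def deformedQuotient (c : Fin n → R) (hm : m ≤ n) :
    Matrix (Fin (n + m)) (Fin (n + m)) R[X] :=
  Matrix.of <| Fin.append (fun a j => C (c a) ^ (j : ℕ))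
    fun k j => divX ((X + C (c (Fin.castLE hm k))) ^ (j : ℕ))

def addPartnerRows (hm : m ≤ n) : Matrix (Fin (n + m)) (Fin (n + m)) R :=
  Fin.append (fun a => Pi.single (Fin.castAdd m a) 1)
    fun k => Pi.single (Fin.natAdd n k) 1 + Pi.single (Fin.castAdd m (Fin.castLE hm k)) 1

theorem det_addPartnerRows (hm : m ≤ n) : (addPartnerRows hm : Matrix _ _ R).det = 1 := by
  rw [det_of_isLowerTriangular]
  · refine prod_eq_one fun i _ => ?_
    induction i using Fin.addCases with
    | left a => simp [addPartnerRows]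
    | right k => simp [addPartnerRows, Pi.single_eq_of_ne (Fin.castAdd_lt_natAdd _ k).ne']
  · intro i j hij
    rw [OrderDual.toDual_lt_toDual] at hij
    induction i using Fin.addCases with
    | left a => simp [addPartnerRows, Pi.single_eq_of_ne hij.ne']
    | right k =>
      simp [addPartnerRows, Pi.single_eq_of_ne hij.ne',
        Pi.single_eq_of_ne ((Fin.castAdd_lt_natAdd _ k).trans hij).ne']

variable (c : Fin n → R) (hm : m ≤ n)

theorem vandermonde_deformedNodes :
    vandermonde (deformedNodes c hm) =
      addPartnerRows hm * (diagonal (Fin.append 1 fun _ => X) * deformedQuotient c hm) := by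
  funext i
  rw [mul_apply_eq_vecMul]
  induction i using Fin.addCases with
  | left a =>
    funext j
    simp [addPartnerRows, deformedNodes, deformedQuotient]
  | right k =>
    funext j
    simp [addPartnerRows, deformedNodes, deformedQuotient, add_vecMul,
      X_mul_divX_X_add_C_pow_add]

theorem det_vandermonde_deformedNodes :
    (vandermonde (deformedNodes c hm)).det = X ^ m * (deformedQuotient c hm).det := by
  rw [vandermonde_deformedNodes, det_mul, det_mul, det_addPartnerRows, det_diagonal,
    Fin.prod_univ_add]
  simp

theorem constantCoeff_deformedQuotient :
    (constantCoeff (R := R)).mapMatrix (deformedQuotient c hm) = doubledVandermonde c hm := by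
  ext i j
  induction i using Fin.addCases with
  | left a => simp [deformedQuotient, doubledVandermonde, coeff_zero_eq_eval_zero]
  | right k => simp [deformedQuotient, doubledVandermonde, coeff_divX, coeff_X_add_C_pow, mul_comm]

theorem coeff_zero_deformedNodes (i : Fin (n + m)) :
    (deformedNodes c hm i).coeff 0 = c (doubledNode hm i) := by
  induction i using Fin.addCases <;> simp [deformedNodes, doubledNode]

theorem prod_sub_deformedNodes :
    ∏ i, ∏ j ∈ Ioi i, (deformedNodes c hm j - deformedNodes c hm i) =
      X ^ m * ∏ i, ∏ j, if i < j ∧ doubledNode hm i ≠ doubledNode hm j then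
        deformedNodes c hm j - deformedNodes c hm i else 1 := by
  have hpartner : ∀ i j, i < j → doubledNode hm i = doubledNode hm j →
      deformedNodes c hm j - deformedNodes c hm i = X := by
    intro i j hij hnode
    induction i using Fin.addCases <;> induction j using Fin.addCases <;>
      simp_all [doubledNode, deformedNodes, (Fin.castAdd_lt_natAdd _ _).not_gt]
  have hcount : ∏ i, ∏ j, (if i < j ∧ doubledNode hm i = doubledNode hm j then X else 1) =
      (X : R[X]) ^ m := by
    rw [prod_comm]
    simp [Fin.prod_univ_add, doubledNode, Fin.castAdd_lt_natAdd,
      (Fin.castAdd_lt_natAdd _ _).not_gt, and_comm (b := _ = _), ite_and]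
  simp_rw [← filter_lt_eq_Ioi, prod_filter, ← hcount, ← prod_mul_distrib]
  refine prod_congr rfl fun i _ => prod_congr rfl fun j _ => ?_
  by_cases hij : i < j <;> by_cases hnode : doubledNode hm i = doubledNode hm j <;>
    simp [hij, hnode, hpartner]

theorem det_doubledVandermonde :
    (doubledVandermonde c hm).det =
      ∏ i, ∏ j, if i < j ∧ doubledNode hm i ≠ doubledNode hm j then
        c (doubledNode hm j) - c (doubledNode hm i) else 1 := by
  have h := det_vandermonde_deformedNodes c hm
  rw [det_vandermonde, prod_sub_deformedNodes] at h
  rw [← constantCoeff_deformedQuotient, ← RingHom.map_det, ← (isRegular_X_pow m).left h]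
  simp [apply_ite, coeff_zero_deformedNodes]

theorem card_doubledNode_fiber (a : Fin n) :
    #{i | doubledNode hm i = a} = if (a : ℕ) < m then 2 else 1 := by
  rw [card_filter, Fin.sum_univ_add]
  simp only [doubledNode, Fin.append_left, Fin.append_right, id, sum_boole, filter_eq', mem_univ,
    if_true, card_singleton, Nat.cast_id]
  split_ifs with h
  · rw [card_eq_one.2 ⟨⟨a, h⟩, by ext k; simp [Fin.ext_iff]⟩]
  · rw [filter_false_of_mem fun k _ hk => h (by simp [← hk]), card_empty]

theorem sq_det_doubledVandermonde :
    (doubledVandermonde c hm).det ^ 2 = ∏ a, ∏ b, (if a < b then (c a - c b) ^ 2 else 1) ^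
      ((if (a : ℕ) < m then 2 else 1) * (if (b : ℕ) < m then 2 else 1)) := by
  calc (doubledVandermonde c hm).det ^ 2
      = ∏ i, ∏ j, if i < j ∧ doubledNode hm i ≠ doubledNode hm j then
          (c (doubledNode hm i) - c (doubledNode hm j)) ^ 2 else 1 := by
        rw [det_doubledVandermonde, ← prod_pow]
        refine prod_congr rfl fun i _ => ?_
        rw [← prod_pow]
        refine prod_congr rfl fun j _ => ?_
        split_ifs <;> ring
    _ = _ := by
        rw [prod_pairs_comp_eq_prod_pow_card_mul_card (doubledNode hm) (fun a b => (c a - c b) ^ 2)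
          fun a b => by ring]
        simp_rw [card_doubledNode_fiber]

end Doubled

theorem prod_sub_sq_pow_eq_sq {R : Type*} [CommRing R] (r : ℕ) (c : Fin (r + 2) → R) :
    ∏ a, ∏ b, (if a < b then (c a - c b) ^ 2 else 1) ^
      ((if (a : ℕ) < r then 2 else 1) * (if (b : ℕ) < r then 2 else 1)) =
    ((c (Fin.natAdd r 0) - c (Fin.natAdd r 1))
      * (∏ i : Fin r, ((c (Fin.castAdd 2 i) - c (Fin.natAdd r 0)) ^ 2
          * (c (Fin.castAdd 2 i) - c (Fin.natAdd r 1)) ^ 2))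
      * (∏ i : Fin r, ∏ j : Fin r,
          if i < j then (c (Fin.castAdd 2 i) - c (Fin.castAdd 2 j)) ^ 4 else 1)) ^ 2 := by
  simp only [Fin.prod_univ_add, Fin.prod_univ_two, Fin.val_castAdd, Fin.val_natAdd, Fin.is_lt,
    add_lt_iff_neg_left, not_lt_zero, ↓reduceIte, Fin.isValue, Nat.reduceAdd, Nat.reduceMul,
    Fin.castAdd_lt_natAdd, (Fin.castAdd_lt_natAdd _ _).not_gt, (Fin.strictMono_castAdd 2).lt_iff_lt,
    Fin.natAdd_lt_natAdd_iff, Fin.lt_one_iff, mul_ite, ite_mul, pow_ite, ite_pow, one_mul, mul_one,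
    one_pow, pow_one, prod_ite_irrel, prod_const_one, prod_ite_eq', mem_univ]
  simp only [mul_pow, ← prod_pow, ite_pow, one_pow, ← pow_mul, prod_mul_distrib]
  ring

theorem confluentVandermonde_eq_reindex (r : ℕ) (b : Fin (r + 2) → ℂ) :
    confluentVandermonde r b = reindex (finCongr (by omega)) (finCongr (by omega))
      (doubledVandermonde b (Nat.le_add_right r 2)) := by
  ext i j
  obtain ⟨i, rfl⟩ := (finCongr (by omega : r + 2 + r = 2 * r + 2)).surjective i
  induction i using Fin.addCases with
  | left a => simp [confluentVandermonde, doubledVandermonde]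
  | right k => simp [confluentVandermonde, doubledVandermonde, Fin.castLE]

/-- Lemma on generalized Vandermonde determinants: up to a sign, the determinant of the
confluent Vandermonde matrix equals
`(b_{r} − b_{r+1}) · ∏_{i<r, j∈{r,r+1}} (bᵢ − bⱼ)² · ∏_{i<j<r} (bᵢ − bⱼ)⁴`
(indices `0`-based). -/
theorem confluentVandermonde_det (r : ℕ) (b : Fin (r + 2) → ℂ) :
    ∃ ε : ℂ, (ε = 1 ∨ ε = -1) ∧
      (confluentVandermonde r b).det =
        ε * (b ⟨r, by omega⟩ - b ⟨r + 1, by omega⟩)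
          * (∏ i : Fin r,
              ((b (Fin.castLE (by omega) i) - b ⟨r, by omega⟩) ^ 2
                * (b (Fin.castLE (by omega) i) - b ⟨r + 1, by omega⟩) ^ 2))
          * (∏ i : Fin r, ∏ j : Fin r,
              if i < j then
                (b (Fin.castLE (by omega) i) - b (Fin.castLE (by omega) j)) ^ 4
              else 1) := by
  have hsq := (sq_det_doubledVandermonde b (Nat.le_add_right r 2)).trans
    (prod_sub_sq_pow_eq_sq r b)
  rw [← det_reindex_self (finCongr (by omega : r + 2 + r = 2 * r + 2)),
    ← confluentVandermonde_eq_reindex] at hsq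
  -- `h` is the goal up to the definitional equalities `Fin.natAdd r 0 = ⟨r, _⟩`,
  -- `Fin.castAdd 2 = Fin.castLE _`
  obtain h | h := sq_eq_sq_iff_eq_or_eq_neg.1 hsq
  · refine ⟨1, .inl rfl, ?_⟩
    rw [one_mul]
    exact h
  · refine ⟨-1, .inr rfl, ?_⟩
    rw [neg_one_mul, neg_mul, neg_mul]
    exact h
end
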